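/- arXiv:1212.1255 — 2 statements merged into one kernel-verified Lean document; each statement's English description precedes it below -/
import Mathlib

section
/- Let d ≥ 2 and let ρ ∈ L¹(ℝ^d) ∩ L∞(ℝ^d). Then there exists a constant C(d) > 0, depending only on d, such that the Newtonian-gradient field F(x) = ∫_{ℝ^d} (x − y)/‖x − y‖^d ρ(y) dy satisfies the log-Lipschitz estimate ‖F(x) − F(y)‖ ≤ C(d)(‖ρ‖_{L¹(ℝ^d)} + ‖ρ‖_{L∞(ℝ^d)}) ‖x − y‖ (1 + log⁻‖x − y‖) for all x, y ∈ ℝ^d. -/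
open Real Set MeasureTheory
open scoped ENNReal

noncomputable section

abbrev Euc (d : ℕ) := EuclideanSpace ℝ (Fin d)

/-- The concave modulus `φ` from the paper: `φ(x) = x (log x)²` for
`x ≤ e^{-1-√2}` (with `φ(0) = 0`, using `log 0 = 0`), and
`φ(x) = x + 2(1+√2)e^{-1-√2}` beyond the junction point. -/
def phi (x : ℝ) : ℝ :=
  if x ≤ Real.exp (-1 - Real.sqrt 2) then x * Real.log x ^ 2
  else x + 2 * (1 + Real.sqrt 2) * Real.exp (-1 - Real.sqrt 2)

def newtField (d : ℕ) (ρ : Euc d → ℝ) (x : Euc d) : Euc d :=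
  ∫ y : Euc d, (ρ y / ‖x - y‖ ^ d) • (x - y)

def negLog (t : ℝ) : ℝ := max 0 (-Real.log t)

/-!
Write `K(z) = z / ‖z‖ⁿ` with `n = dim E`, so that `F(x) = ∫ ρ(w) K(x - w) dw` and
`‖K(z)‖ = ‖z‖^(1-n)` is locally integrable. For `x ≠ y` and `r = ‖x - y‖`, split the integral
of `F(x) - F(y)` at the ball `B(x, 2r)`. Inside it, bound the two terms separately: in polar
coordinates `∫_{B(c,R)} ‖c - w‖^(1-n) dw = σ R`, with `σ` the area of the unit sphere, which
gives `5 B σ r`. Outside it, `‖K(x - w) - K(y - w)‖ ≤ (1 + n 3^(n-1)) r / ‖x - w‖ⁿ`, and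
`∫ |ρ(w)| / ‖x - w‖ⁿ` over `‖x - w‖ ≥ 2r` is at most `B σ log⁻(2r)` on the annulus
`2r ≤ ‖x - w‖ < 1` plus `A` outside the unit ball.
-/

open Metric

local notation "dim" => Module.finrank ℝ

theorem preimage_norm_sub_Iio {E : Type*} [SeminormedAddCommGroup E] (c : E) (R : ℝ) :
    (fun w => ‖c - w‖) ⁻¹' Iio R = ball c R := by
  ext w; simp [dist_eq_norm']

section Polar

variable {E : Type*} [NormedAddCommGroup E] [NormedSpace ℝ E] [MeasurableSpace E] [BorelSpace E]
  [FiniteDimensional ℝ E] [Nontrivial E] (μ : Measure E) [μ.IsAddHaarMeasure]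

theorem lintegral_fun_norm_addHaar {f : ℝ → ℝ≥0∞} (hf : Measurable f) :
    ∫⁻ x, f ‖x‖ ∂μ =
      μ.toSphere univ * ∫⁻ r in Ioi (0 : ℝ), ENNReal.ofReal (r ^ (dim E - 1)) * f r := by
  have hf' : Measurable fun r : Ioi (0 : ℝ) => f r := hf.comp measurable_subtype_coe
  calc
    ∫⁻ x, f ‖x‖ ∂μ = ∫⁻ x : ({0}ᶜ : Set E), f ‖(x : E)‖ ∂(μ.comap (↑)) := by
      rw [lintegral_subtype_comap (measurableSet_singleton 0).compl (fun x => f ‖x‖),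
        restrict_compl_singleton]
    _ = ∫⁻ p : sphere (0 : E) 1 × Ioi (0 : ℝ), 1 * f p.2
          ∂(μ.toSphere.prod (.volumeIoiPow (dim E - 1))) := by
      rw [← μ.measurePreserving_homeomorphUnitSphereProd.lintegral_comp_emb
        (Homeomorph.measurableEmbedding _) (fun p => 1 * f p.2)]
      simp
    _ = μ.toSphere univ * ∫⁻ r : Ioi (0 : ℝ), f r ∂(.volumeIoiPow (dim E - 1)) := by
      rw [lintegral_prod_mul (f := fun _ => 1) (g := fun r : Ioi (0 : ℝ) => f r)
        aemeasurable_const hf'.aemeasurable, lintegral_one]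
    _ = _ := by
      rw [Measure.volumeIoiPow, lintegral_withDensity_eq_lintegral_mul _
        (measurable_subtype_coe.pow_const _).ennreal_ofReal hf']
      exact congrArg _ (lintegral_subtype_comap measurableSet_Ioi
        fun r => ENNReal.ofReal (r ^ (dim E - 1)) * f r)

theorem setLIntegral_fun_norm_sub_addHaar (c : E) {s : Set ℝ} (hs : MeasurableSet s)
    {f : ℝ → ℝ≥0∞} (hf : Measurable f) :
    ∫⁻ w in (fun w => ‖c - w‖) ⁻¹' s, f ‖c - w‖ ∂μ =
      μ.toSphere univ * ∫⁻ r in s ∩ Ioi 0, ENNReal.ofReal (r ^ (dim E - 1)) * f r := by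
  have hfs : Measurable (s.indicator f) := hf.indicator hs
  calc ∫⁻ w in (fun w => ‖c - w‖) ⁻¹' s, f ‖c - w‖ ∂μ = ∫⁻ w, s.indicator f ‖c - w‖ ∂μ := by
        rw [← lintegral_indicator (hs.preimage (by fun_prop))]
        exact lintegral_congr fun w => indicator_comp_right (fun w => ‖c - w‖)
    _ = _ := by
      rw [(Measure.measurePreserving_sub_left μ c).lintegral_comp (f := fun z => s.indicator f ‖z‖)
          (hfs.comp measurable_norm), lintegral_fun_norm_addHaar μ hfs,
        ← Measure.restrict_restrict hs, ← lintegral_indicator hs]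
      simp_rw [indicator_mul_right]

theorem lintegral_ball_inv_norm_sub_pow (c : E) (R : ℝ) :
    ∫⁻ w in ball c R, ENNReal.ofReal (‖c - w‖ ^ (dim E - 1))⁻¹ ∂μ =
      μ.toSphere univ * ENNReal.ofReal R := by
  rw [← preimage_norm_sub_Iio, setLIntegral_fun_norm_sub_addHaar μ c measurableSet_Iio
    (by fun_prop : Measurable fun t : ℝ => ENNReal.ofReal (t ^ (dim E - 1))⁻¹), Iio_inter_Ioi]
  congr 1
  calc ∫⁻ r in Ioo 0 R, ENNReal.ofReal (r ^ (dim E - 1)) * ENNReal.ofReal (r ^ (dim E - 1))⁻¹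
      = ∫⁻ _ in Ioo 0 R, 1 := setLIntegral_congr_fun measurableSet_Ioo fun r hr => by
        rw [← ENNReal.ofReal_mul (pow_nonneg hr.1.le _),
          mul_inv_cancel₀ (pow_ne_zero _ hr.1.ne'), ENNReal.ofReal_one]
    _ = ENNReal.ofReal R := by simp

theorem lintegral_annulus_inv_norm_sub_pow (c : E) {ε : ℝ} (hε : 0 < ε) (hε1 : ε ≤ 1) :
    ∫⁻ w in ball c 1 \ ball c ε, ENNReal.ofReal (‖c - w‖ ^ dim E)⁻¹ ∂μ =
      μ.toSphere univ * ENNReal.ofReal (-log ε) := by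
  rw [← preimage_norm_sub_Iio, ← preimage_norm_sub_Iio, ← preimage_sdiff, Iio_sdiff_Iio,
    setLIntegral_fun_norm_sub_addHaar μ c measurableSet_Ico
      (by fun_prop : Measurable fun t : ℝ => ENNReal.ofReal (t ^ dim E)⁻¹),
    (inter_eq_left (t := Ioi 0)).2 fun r hr => hε.trans_le hr.1]
  congr 1
  have hpos : ∀ r ∈ Icc ε 1, 0 < r := fun r hr => hε.trans_le hr.1
  calc ∫⁻ r in Ico ε 1, ENNReal.ofReal (r ^ (dim E - 1)) * ENNReal.ofReal (r ^ dim E)⁻¹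
      = ∫⁻ r in Ioc ε 1, ENNReal.ofReal r⁻¹ := by
        rw [Measure.restrict_congr_set Ico_ae_eq_Ioc]
        refine setLIntegral_congr_fun measurableSet_Ioc fun r hr => ?_
        have hr0 := hpos r (Ioc_subset_Icc_self hr)
        rw [← ENNReal.ofReal_mul (pow_nonneg hr0.le _),
          ← pow_sub_one_mul Module.finrank_pos.ne']
        field_simp
    _ = ENNReal.ofReal (∫ r in ε..1, r⁻¹) := by
        rw [intervalIntegral.integral_of_le hε1, ofReal_integral_eq_lintegral_ofReal]
        · exact (continuousOn_inv₀.mono fun r hr => (hpos r hr).ne').integrableOn_Icc.mono_set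
            Ioc_subset_Icc_self
        · exact (ae_restrict_iff' measurableSet_Ioc).2
            (.of_forall fun r hr => (inv_pos.2 (hpos r (Ioc_subset_Icc_self hr))).le)
    _ = ENNReal.ofReal (-log ε) := by
        rw [integral_inv_of_pos hε one_pos, one_div, log_inv]

end Polar

section Kernel

variable {E : Type*} [NormedAddCommGroup E] [NormedSpace ℝ E]

theorem norm_inv_norm_pow_smul_sub_le {a b : E} (n : ℕ) (h : ‖a - b‖ ≤ ‖a‖ / 2) :
    ‖(‖a‖ ^ n)⁻¹ • a - (‖b‖ ^ n)⁻¹ • b‖ ≤ (1 + n * 3 ^ (n - 1)) * ‖a - b‖ / ‖a‖ ^ n := by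
  rcases n.eq_zero_or_pos with rfl | hn
  · simp
  rcases eq_or_ne a 0 with rfl | ha
  · simp_all
  have hab : ‖a‖ - ‖b‖ ≤ ‖a - b‖ := norm_sub_norm_le a b
  have hba : ‖b‖ - ‖a‖ ≤ ‖a - b‖ := by simpa [norm_sub_rev] using norm_sub_norm_le b a
  have ha0 : 0 < ‖a‖ := norm_pos_iff.2 ha
  have hb0 : 0 < ‖b‖ := by linarith
  have hmax : max ‖b‖ ‖a‖ ≤ 3 * ‖b‖ := max_le (by linarith) (by linarith)
  have hpow : |‖b‖ ^ n - ‖a‖ ^ n| ≤ ‖a - b‖ * n * (3 ^ (n - 1) * ‖b‖ ^ (n - 1)) := by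
    calc |‖b‖ ^ n - ‖a‖ ^ n| ≤ |‖b‖ - ‖a‖| * n * max |‖b‖| |‖a‖| ^ (n - 1) :=
          abs_pow_sub_pow_le _ _ _
      _ ≤ ‖a - b‖ * n * (3 * ‖b‖) ^ (n - 1) := by
        simp only [abs_norm]
        gcongr
        exact abs_sub_le_iff.2 ⟨hba, hab⟩
      _ = _ := by rw [mul_pow]
  have hdecomp : (‖a‖ ^ n)⁻¹ • a - (‖b‖ ^ n)⁻¹ • b =
      (‖a‖ ^ n)⁻¹ • (a - b) + ((‖a‖ ^ n)⁻¹ - (‖b‖ ^ n)⁻¹) • b := by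
    rw [smul_sub, sub_smul]; abel
  have hb_pow : ‖b‖ ^ (n - 1) * ‖b‖ = ‖b‖ ^ n := pow_sub_one_mul hn.ne' _
  calc ‖(‖a‖ ^ n)⁻¹ • a - (‖b‖ ^ n)⁻¹ • b‖
      ≤ ‖a - b‖ / ‖a‖ ^ n + |‖b‖ ^ n - ‖a‖ ^ n| * ‖b‖ / (‖a‖ ^ n * ‖b‖ ^ n) := by
        rw [hdecomp, inv_sub_inv (by positivity) (by positivity)]
        refine (norm_add_le _ _).trans_eq ?_
        rw [norm_smul, norm_smul, Real.norm_eq_abs, Real.norm_eq_abs, abs_div,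
          abs_of_pos (by positivity : 0 < ‖a‖ ^ n * ‖b‖ ^ n), abs_inv,
          abs_of_pos (by positivity : 0 < ‖a‖ ^ n)]
        ring
    _ ≤ ‖a - b‖ / ‖a‖ ^ n +
          ‖a - b‖ * n * (3 ^ (n - 1) * ‖b‖ ^ (n - 1)) * ‖b‖ / (‖a‖ ^ n * ‖b‖ ^ n) := by
        gcongr
    _ = (1 + n * 3 ^ (n - 1)) * ‖a - b‖ / ‖a‖ ^ n := by
        rw [← hb_pow]
        field_simp

theorem norm_div_norm_pow_smul_le (a : ℝ) (z : E) {n : ℕ} (hn : n ≠ 0) :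
    ‖(a / ‖z‖ ^ n) • z‖ ≤ |a| * (‖z‖ ^ (n - 1))⁻¹ := by
  rcases eq_or_ne z 0 with rfl | hz
  · simp only [smul_zero, norm_zero]
    positivity
  have hz0 : 0 < ‖z‖ := norm_pos_iff.2 hz
  rw [norm_smul, Real.norm_eq_abs, abs_div, abs_of_pos (by positivity : 0 < ‖z‖ ^ n),
    ← pow_sub_one_mul hn]
  refine le_of_eq ?_
  field_simp

theorem norm_div_norm_pow_smul_sub_le (a : ℝ) {u v : E} (n : ℕ) (h : ‖u - v‖ ≤ ‖u‖ / 2) :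
    ‖(a / ‖u‖ ^ n) • u - (a / ‖v‖ ^ n) • v‖ ≤
      (1 + n * 3 ^ (n - 1)) * ‖u - v‖ * (|a| * (‖u‖ ^ n)⁻¹) := by
  have hK := norm_inv_norm_pow_smul_sub_le n h
  rw [div_eq_mul_inv, div_eq_mul_inv, mul_smul, mul_smul, ← smul_sub, norm_smul,
    Real.norm_eq_abs]
  calc |a| * ‖(‖u‖ ^ n)⁻¹ • u - (‖v‖ ^ n)⁻¹ • v‖
      ≤ |a| * ((1 + n * 3 ^ (n - 1)) * ‖u - v‖ / ‖u‖ ^ n) := by gcongr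
    _ = _ := by ring

end Kernel

theorem negLog_nonneg (t : ℝ) : 0 ≤ negLog t := le_max_left _ _

theorem negLog_le_negLog {s t : ℝ} (hs : 0 < s) (hst : s ≤ t) : negLog t ≤ negLog s :=
  max_le_max le_rfl (neg_le_neg (log_le_log hs hst))

theorem negLog_of_le_one {t : ℝ} (h0 : 0 ≤ t) (h1 : t ≤ 1) : negLog t = -log t :=
  max_eq_right (neg_nonneg.2 (log_nonpos h0 h1))

theorem nonneg_of_ae_abs_le {α : Type*} [MeasurableSpace α] {μ : Measure α} [NeZero μ]
    {ρ : α → ℝ} {B : ℝ} (hB : ∀ᵐ w ∂μ, |ρ w| ≤ B) : 0 ≤ B :=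
  let ⟨_, hw⟩ := hB.exists
  (abs_nonneg _).trans hw

theorem lintegral_compl_ball_one_abs_mul_inv_pow_le {α : Type*} [SeminormedAddCommGroup α]
    [MeasurableSpace α] [OpensMeasurableSpace α] {μ : Measure α} {ρ : α → ℝ} {A : ℝ}
    (hρ : Integrable ρ μ) (hA : ∫ w, |ρ w| ∂μ ≤ A) (c : α) (m : ℕ) :
    ∫⁻ w in (ball c 1)ᶜ, ENNReal.ofReal (|ρ w| * (‖c - w‖ ^ m)⁻¹) ∂μ ≤ ENNReal.ofReal A := by
  calc ∫⁻ w in (ball c 1)ᶜ, ENNReal.ofReal (|ρ w| * (‖c - w‖ ^ m)⁻¹) ∂μ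
      ≤ ∫⁻ w in (ball c 1)ᶜ, ENNReal.ofReal |ρ w| ∂μ :=
        setLIntegral_mono' measurableSet_ball.compl fun w hw => by
          have h1 : 1 ≤ ‖c - w‖ := by simpa [dist_eq_norm'] using hw
          exact ENNReal.ofReal_le_ofReal (mul_le_of_le_one_right (abs_nonneg _)
            (inv_le_one_of_one_le₀ (one_le_pow₀ h1)))
    _ ≤ ∫⁻ w, ENNReal.ofReal |ρ w| ∂μ := setLIntegral_le_lintegral _ _
    _ ≤ ENNReal.ofReal A := by
        rw [← ofReal_integral_eq_lintegral_ofReal hρ.abs (.of_forall fun _ => abs_nonneg _)]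
        exact ENNReal.ofReal_le_ofReal hA

def newtonGrad {E : Type*} [NormedAddCommGroup E] [NormedSpace ℝ E] [MeasurableSpace E]
    (μ : Measure E) (ρ : E → ℝ) (x : E) : E :=
  ∫ y, (ρ y / ‖x - y‖ ^ dim E) • (x - y) ∂μ

-- `1 + n 3^(n-1)` is the constant of `norm_inv_norm_pow_smul_sub_le`; `5` is the near-field one.
def newtonLogLipConst {E : Type*} [NormedAddCommGroup E] [NormedSpace ℝ E] [MeasurableSpace E]
    (μ : Measure E) : ℝ :=
  (6 + dim E * 3 ^ (dim E - 1)) * (μ.toSphere.real univ + 1)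

section Field

variable {E : Type*} [NormedAddCommGroup E] [NormedSpace ℝ E] [MeasurableSpace E] [BorelSpace E]
  [FiniteDimensional ℝ E] [Nontrivial E] {μ : Measure E} [μ.IsAddHaarMeasure] {ρ : E → ℝ}
  {A B : ℝ}

theorem lintegral_ball_norm_newton_le (hB : ∀ᵐ w ∂μ, |ρ w| ≤ B) (c : E) (R : ℝ) :
    ∫⁻ w in ball c R, ENNReal.ofReal ‖(ρ w / ‖c - w‖ ^ dim E) • (c - w)‖ ∂μ ≤
      ENNReal.ofReal (B * μ.toSphere.real univ * R) := by
  have hB0 := nonneg_of_ae_abs_le hB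
  calc ∫⁻ w in ball c R, ENNReal.ofReal ‖(ρ w / ‖c - w‖ ^ dim E) • (c - w)‖ ∂μ
      ≤ ∫⁻ w in ball c R, ENNReal.ofReal B * ENNReal.ofReal (‖c - w‖ ^ (dim E - 1))⁻¹ ∂μ := by
        refine lintegral_mono_ae (ae_restrict_of_ae (hB.mono fun w hw => ?_))
        rw [← ENNReal.ofReal_mul hB0]
        refine ENNReal.ofReal_le_ofReal
          ((norm_div_norm_pow_smul_le _ _ Module.finrank_pos.ne').trans ?_)
        gcongr
    _ = ENNReal.ofReal (B * μ.toSphere.real univ * R) := by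
        rw [lintegral_const_mul' _ _ ENNReal.ofReal_ne_top, lintegral_ball_inv_norm_sub_pow,
          ENNReal.ofReal_mul (by positivity), ENNReal.ofReal_mul hB0, ofReal_measureReal,
          mul_assoc]

theorem lintegral_compl_ball_abs_mul_inv_pow_le (hρ : Integrable ρ μ) (hA : ∫ w, |ρ w| ∂μ ≤ A)
    (hB : ∀ᵐ w ∂μ, |ρ w| ≤ B) (c : E) {ε : ℝ} (hε : 0 < ε) :
    ∫⁻ w in (ball c ε)ᶜ, ENNReal.ofReal (|ρ w| * (‖c - w‖ ^ dim E)⁻¹) ∂μ ≤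
      ENNReal.ofReal (B * μ.toSphere.real univ * negLog ε + A) := by
  have hA0 : 0 ≤ A := (integral_nonneg fun _ => abs_nonneg _).trans hA
  have hB0 := nonneg_of_ae_abs_le hB
  have hσ : 0 ≤ B * μ.toSphere.real univ * negLog ε := by
    have := negLog_nonneg ε; positivity
  rcases le_or_gt 1 ε with hε1 | hε1
  · exact (lintegral_mono_set (compl_subset_compl.2 (ball_subset_ball hε1))).trans
      ((lintegral_compl_ball_one_abs_mul_inv_pow_le hρ hA c _).trans
        (ENNReal.ofReal_le_ofReal (by linarith)))
  have hsplit : (ball c ε)ᶜ = (ball c 1 \ ball c ε) ∪ (ball c 1)ᶜ := by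
    have := @ball_subset_ball _ _ c _ _ hε1.le
    ext w; simp only [mem_compl_iff, mem_union, mem_sdiff]; tauto
  rw [hsplit, lintegral_union measurableSet_ball.compl
    (disjoint_compl_right.mono_left sdiff_subset), ENNReal.ofReal_add hσ hA0]
  gcongr
  · calc ∫⁻ w in ball c 1 \ ball c ε, ENNReal.ofReal (|ρ w| * (‖c - w‖ ^ dim E)⁻¹) ∂μ
        ≤ ∫⁻ w in ball c 1 \ ball c ε,
            ENNReal.ofReal B * ENNReal.ofReal (‖c - w‖ ^ dim E)⁻¹ ∂μ := by
          refine lintegral_mono_ae (ae_restrict_of_ae (hB.mono fun w hw => ?_))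
          rw [← ENNReal.ofReal_mul hB0]
          gcongr
      _ = _ := by
          rw [lintegral_const_mul' _ _ ENNReal.ofReal_ne_top,
            lintegral_annulus_inv_norm_sub_pow μ c hε hε1.le, negLog_of_le_one hε.le hε1.le,
            ENNReal.ofReal_mul (by positivity), ENNReal.ofReal_mul hB0, ofReal_measureReal,
            mul_assoc]
  · exact lintegral_compl_ball_one_abs_mul_inv_pow_le hρ hA c _

theorem integrable_newton (hρ : Integrable ρ μ) (hB : ∀ᵐ w ∂μ, |ρ w| ≤ B) (x : E) :
    Integrable (fun w => (ρ w / ‖x - w‖ ^ dim E) • (x - w)) μ := by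
  refine ⟨(hρ.aemeasurable.div (by fun_prop)).aestronglyMeasurable.smul (by fun_prop), ?_⟩
  rw [hasFiniteIntegral_iff_norm, ← lintegral_add_compl _ (measurableSet_ball (x := x) (ε := 1))]
  have hfar : ∫⁻ w in (ball x 1)ᶜ, ENNReal.ofReal ‖(ρ w / ‖x - w‖ ^ dim E) • (x - w)‖ ∂μ ≤
      ENNReal.ofReal (∫ w, |ρ w| ∂μ) :=
    (setLIntegral_mono' measurableSet_ball.compl fun w _ => ENNReal.ofReal_le_ofReal
      (norm_div_norm_pow_smul_le _ _ Module.finrank_pos.ne')).trans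
      (lintegral_compl_ball_one_abs_mul_inv_pow_le hρ le_rfl x _)
  exact ENNReal.add_lt_top.2 ⟨(lintegral_ball_norm_newton_le hB x 1).trans_lt ENNReal.ofReal_lt_top,
    hfar.trans_lt ENNReal.ofReal_lt_top⟩

theorem lintegral_ball_norm_newton_sub_le (hρ : Integrable ρ μ) (hB : ∀ᵐ w ∂μ, |ρ w| ≤ B)
    (x y : E) :
    ∫⁻ w in ball x (2 * ‖x - y‖), ENNReal.ofReal
        ‖(ρ w / ‖x - w‖ ^ dim E) • (x - w) - (ρ w / ‖y - w‖ ^ dim E) • (y - w)‖ ∂μ ≤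
      ENNReal.ofReal (5 * B * μ.toSphere.real univ * ‖x - y‖) := by
  have hB0 := nonneg_of_ae_abs_le hB
  have hsub : ball x (2 * ‖x - y‖) ⊆ ball y (3 * ‖x - y‖) := by
    refine ball_subset_ball' (le_of_eq ?_)
    rw [dist_eq_norm]; ring
  calc _ ≤ ∫⁻ w in ball x (2 * ‖x - y‖), (ENNReal.ofReal ‖(ρ w / ‖x - w‖ ^ dim E) • (x - w)‖ +
          ENNReal.ofReal ‖(ρ w / ‖y - w‖ ^ dim E) • (y - w)‖) ∂μ := by
        refine lintegral_mono fun w => ?_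
        rw [← ENNReal.ofReal_add (norm_nonneg _) (norm_nonneg _)]
        exact ENNReal.ofReal_le_ofReal (norm_sub_le _ _)
    _ ≤ ENNReal.ofReal (B * μ.toSphere.real univ * (2 * ‖x - y‖)) +
          ENNReal.ofReal (B * μ.toSphere.real univ * (3 * ‖x - y‖)) := by
        rw [lintegral_add_left'
          (integrable_newton hρ hB x).norm.aemeasurable.ennreal_ofReal.restrict]
        exact add_le_add (lintegral_ball_norm_newton_le hB x _)
          ((lintegral_mono_set hsub).trans (lintegral_ball_norm_newton_le hB y _))
    _ = ENNReal.ofReal (5 * B * μ.toSphere.real univ * ‖x - y‖) := by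
        rw [← ENNReal.ofReal_add (by positivity) (by positivity)]
        congr 1
        ring

theorem lintegral_compl_ball_norm_newton_sub_le (hρ : Integrable ρ μ) (hA : ∫ w, |ρ w| ∂μ ≤ A)
    (hB : ∀ᵐ w ∂μ, |ρ w| ≤ B) {x y : E} (hxy : x ≠ y) :
    ∫⁻ w in (ball x (2 * ‖x - y‖))ᶜ, ENNReal.ofReal
        ‖(ρ w / ‖x - w‖ ^ dim E) • (x - w) - (ρ w / ‖y - w‖ ^ dim E) • (y - w)‖ ∂μ ≤
      ENNReal.ofReal ((1 + dim E * 3 ^ (dim E - 1)) * ‖x - y‖ *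
        (B * μ.toSphere.real univ * negLog (2 * ‖x - y‖) + A)) := by
  set K : ℝ := (1 + dim E * 3 ^ (dim E - 1)) * ‖x - y‖
  have hK : 0 ≤ K := by positivity
  have hr : 0 < 2 * ‖x - y‖ := by simpa [sub_eq_zero] using hxy
  calc _ ≤ ∫⁻ w in (ball x (2 * ‖x - y‖))ᶜ,
          ENNReal.ofReal K * ENNReal.ofReal (|ρ w| * (‖x - w‖ ^ dim E)⁻¹) ∂μ := by
        refine setLIntegral_mono' measurableSet_ball.compl fun w hw => ?_
        have hfar : ‖(x - w) - (y - w)‖ ≤ ‖x - w‖ / 2 := by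
          simp only [mem_compl_iff, mem_ball', dist_eq_norm, not_lt] at hw
          rw [sub_sub_sub_cancel_right]; linarith
        rw [← ENNReal.ofReal_mul hK]
        exact ENNReal.ofReal_le_ofReal <| by
          simpa [sub_sub_sub_cancel_right] using norm_div_norm_pow_smul_sub_le (ρ w) (dim E) hfar
    _ ≤ _ := by
        rw [lintegral_const_mul' _ _ ENNReal.ofReal_ne_top, ENNReal.ofReal_mul hK]
        gcongr
        exact lintegral_compl_ball_abs_mul_inv_pow_le hρ hA hB x hr

theorem norm_newtonGrad_sub_le (hρ : Integrable ρ μ) (hA : ∫ w, |ρ w| ∂μ ≤ A)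
    (hB : ∀ᵐ w ∂μ, |ρ w| ≤ B) {x y : E} (hxy : x ≠ y) :
    ‖newtonGrad μ ρ x - newtonGrad μ ρ y‖ ≤
      5 * B * μ.toSphere.real univ * ‖x - y‖ + (1 + dim E * 3 ^ (dim E - 1)) * ‖x - y‖ *
        (B * μ.toSphere.real univ * negLog (2 * ‖x - y‖) + A) := by
  have hA0 : 0 ≤ A := (integral_nonneg fun _ => abs_nonneg _).trans hA
  have hB0 := nonneg_of_ae_abs_le hB
  have hL := negLog_nonneg (2 * ‖x - y‖)
  rw [newtonGrad, newtonGrad,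
    ← integral_sub (integrable_newton hρ hB x) (integrable_newton hρ hB y)]
  refine (norm_integral_le_lintegral_norm _).trans
    (ENNReal.toReal_le_of_le_ofReal (by positivity) ?_)
  rw [← lintegral_add_compl _ (measurableSet_ball (x := x) (ε := 2 * ‖x - y‖)),
    ENNReal.ofReal_add (by positivity) (by positivity)]
  exact add_le_add (lintegral_ball_norm_newton_sub_le hρ hB x y)
    (lintegral_compl_ball_norm_newton_sub_le hρ hA hB hxy)

theorem newtonGrad_logLipschitz (hρ : Integrable ρ μ) (hA : ∫ w, |ρ w| ∂μ ≤ A)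
    (hB : ∀ᵐ w ∂μ, |ρ w| ≤ B) (x y : E) :
    ‖newtonGrad μ ρ x - newtonGrad μ ρ y‖ ≤
      newtonLogLipConst μ * (A + B) * ‖x - y‖ * (1 + negLog ‖x - y‖) := by
  rcases eq_or_ne x y with rfl | hxy
  · simp
  have hA0 : 0 ≤ A := (integral_nonneg fun _ => abs_nonneg _).trans hA
  have hB0 := nonneg_of_ae_abs_le hB
  have hr : 0 < ‖x - y‖ := norm_pos_iff.2 (sub_ne_zero.2 hxy)
  set r := ‖x - y‖
  set σ := μ.toSphere.real univ
  set L := negLog r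
  set M := (σ + 1) * (A + B)
  have hσ : 0 ≤ σ := measureReal_nonneg
  have hL : 0 ≤ L := negLog_nonneg r
  have hBM : B * σ ≤ M := by nlinarith
  have hAM : A ≤ M := by nlinarith
  have hL2 : negLog (2 * r) ≤ L := negLog_le_negLog hr (by linarith)
  calc ‖newtonGrad μ ρ x - newtonGrad μ ρ y‖
      ≤ 5 * B * σ * r + (1 + dim E * 3 ^ (dim E - 1)) * r * (B * σ * negLog (2 * r) + A) :=
        norm_newtonGrad_sub_le hρ hA hB hxy
    _ ≤ 5 * M * r + (1 + dim E * 3 ^ (dim E - 1)) * r * (M * L + M) := by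
        rw [mul_assoc 5 B]
        gcongr
        exact negLog_nonneg _
    _ ≤ newtonLogLipConst μ * (A + B) * r * (1 + L) := by
        rw [newtonLogLipConst]
        nlinarith [mul_nonneg (mul_nonneg (by positivity : 0 ≤ M) hr.le) hL]

end Field

theorem newtField_eq_newtonGrad (d : ℕ) (ρ : Euc d → ℝ) : newtField d ρ = newtonGrad volume ρ := by
  ext1 x
  simp only [newtField, newtonGrad, finrank_euclideanSpace_fin]

/-- for `ρ ∈ L¹ ∩ L∞(ℝ^d)`, `d ≥ 2`, the Newtonian-gradient
field satisfies the log-Lipschitz estimate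
`‖F(x) − F(y)‖ ≤ C(d)(‖ρ‖_{L¹} + ‖ρ‖_{L∞}) ‖x−y‖ (1 + log⁻‖x−y‖)`
for a constant `C(d) > 0` depending only on the dimension. -/
theorem newtField_logLipschitz (d : ℕ) (hd : 2 ≤ d) :
    ∃ C : ℝ, 0 < C ∧
      ∀ (ρ : Euc d → ℝ) (A B : ℝ), Integrable ρ →
        (∫ x : Euc d, |ρ x|) ≤ A →
        (∀ᵐ x ∂(volume : Measure (Euc d)), |ρ x| ≤ B) →
        ∀ x y : Euc d,
          ‖newtField d ρ x - newtField d ρ y‖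
            ≤ C * (A + B) * ‖x - y‖ * (1 + negLog ‖x - y‖) := by
  have : Nontrivial (Euc d) :=
    Module.nontrivial_of_finrank_pos (R := ℝ) (by rw [finrank_euclideanSpace_fin]; omega)
  refine ⟨newtonLogLipConst (volume : Measure (Euc d)), by unfold newtonLogLipConst; positivity, ?_⟩
  intro ρ A B hρ hA hB x y
  rw [newtField_eq_newtonGrad]
  exact newtonGrad_logLipschitz hρ hA hB x y
end
end

section
/- Fix m > 0 and define ω : [0,∞) → [0,∞) by ω(x) = √(m x φ(x/m)). Then ω is continuous and strictly increasing on [0,∞) with ω(0) = 0, ω > 0 on (0,∞), and for every s₀ > 0 the Osgood condition holds: ∫_{(0,s₀]} 1/ω(r) dr = +∞. -/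
open Real Set MeasureTheory
open scoped ENNReal

noncomputable section

/-- The modulus `ω(x) = √(m x φ(x/m))` associated with mass `m`. -/
def omega (m x : ℝ) : ℝ := Real.sqrt (m * x * phi (x / m))

/-!
Near `0`, with `ξ = e^{-1-√2}`, the modulus is `ω(r) = |r log (r/m)|` for `r ≤ m ξ`,
and `log (log (r/m))` is an antiderivative of `1 / (r log (r/m))` that is unbounded as
`r → 0⁺`; this forces `∫_{(0,s₀]} dr/ω(r) = ∞`. Continuity and monotonicity of `ω` reduce
to those of `φ`, whose two pieces agree at `ξ` because `(1 + √2)² = 1 + 2(1 + √2)`; on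
`[0, ξ]` the piece `x (log x)²` increases since its derivative `log x (log x + 2)` is
positive for `x < e⁻²`.
-/

open Filter Topology

local notation "ξ" => Real.exp (-1 - Real.sqrt 2)

lemma junction_pos : 0 < ξ := exp_pos _

lemma one_add_sqrt_two_sq : (1 + √2) ^ 2 = 1 + 2 * (1 + √2) := by
  nlinarith [sq_sqrt (show (0 : ℝ) ≤ 2 by norm_num)]

lemma junction_le_exp_neg_two : ξ ≤ exp (-2) := by
  gcongr
  nlinarith [one_lt_sqrt_two]

lemma junction_lt_one : ξ < 1 :=
  junction_le_exp_neg_two.trans_lt (Real.exp_lt_one_iff.2 (by norm_num))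

lemma continuousOn_mul_log_sq : ContinuousOn (fun x : ℝ => x * log x ^ 2) (Ici 0) := by
  have h : Continuous fun x : ℝ => 4 * (√x * log √x) ^ 2 :=
    continuous_const.mul ((continuous_mul_log.comp continuous_sqrt).pow 2)
  refine h.continuousOn.congr fun x (hx : 0 ≤ x) => ?_
  simp only [log_sqrt hx, mul_pow, sq_sqrt hx]
  ring

lemma strictMonoOn_mul_log_sq :
    StrictMonoOn (fun x : ℝ => x * log x ^ 2) (Icc 0 (exp (-2))) := by
  refine strictMonoOn_of_deriv_pos (convex_Icc _ _)
    (continuousOn_mul_log_sq.mono Icc_subset_Ici_self) fun x hx => ?_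
  rw [interior_Icc] at hx
  have hlog : log x < -2 := by simpa using log_lt_log hx.1 hx.2
  have hx0 : x ≠ 0 := hx.1.ne'
  have hderiv : HasDerivAt (fun x : ℝ => x * log x ^ 2) (log x * (log x + 2)) x := by
    refine ((hasDerivAt_id' x).fun_mul ((hasDerivAt_log hx0).fun_pow 2)).congr_deriv ?_
    field_simp
    ring
  rw [hderiv.deriv]
  nlinarith

lemma phi_eqOn_Iic : EqOn phi (fun x => x * log x ^ 2) (Iic ξ) :=
  fun _ hx => if_pos hx

lemma phi_eqOn_Ici : EqOn phi (fun x => x + 2 * (1 + √2) * ξ) (Ici ξ) := by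
  intro x hx
  rcases (mem_Ici.1 hx).eq_or_lt with rfl | hlt
  · rw [phi_eqOn_Iic self_mem_Iic]
    dsimp only
    rw [log_exp]
    linear_combination ξ * one_add_sqrt_two_sq
  · exact if_neg hlt.not_ge

lemma phi_zero : phi 0 = 0 := by
  simp [phi_eqOn_Iic junction_pos.le]

lemma phi_continuousOn : ContinuousOn phi (Ici 0) := by
  rw [← Icc_union_Ici_eq_Ici junction_pos.le]
  refine ContinuousOn.union_of_isClosed ?_ ?_ isClosed_Icc isClosed_Ici
  · exact (continuousOn_mul_log_sq.mono Icc_subset_Ici_self).congr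
      fun x hx => phi_eqOn_Iic hx.2
  · exact (continuous_id.add continuous_const).continuousOn.congr phi_eqOn_Ici

lemma phi_strictMonoOn : StrictMonoOn phi (Ici 0) := by
  rw [← Icc_union_Ici_eq_Ici junction_pos.le]
  refine StrictMonoOn.union ?_ ?_ (isGreatest_Icc junction_pos.le) isLeast_Ici
  · refine (strictMonoOn_mul_log_sq.mono (Icc_subset_Icc_right junction_le_exp_neg_two)).congr
      fun x hx => (phi_eqOn_Iic hx.2).symm
  · exact fun x hx y hy hxy => by simpa [phi_eqOn_Ici hx, phi_eqOn_Ici hy] using hxy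

lemma phi_nonneg {x : ℝ} (hx : 0 ≤ x) : 0 ≤ phi x :=
  phi_zero ▸ phi_strictMonoOn.monotoneOn self_mem_Ici hx hx

lemma omega_zero (m : ℝ) : omega m 0 = 0 := by
  simp [omega]

lemma omega_continuousOn {m : ℝ} (hm : 0 ≤ m) : ContinuousOn (omega m) (Ici 0) := by
  refine continuous_sqrt.comp_continuousOn
    ((continuous_const.mul continuous_id).continuousOn.mul ?_)
  exact phi_continuousOn.comp (continuous_id.div_const m).continuousOn
    fun x (hx : 0 ≤ x) => div_nonneg hx hm

lemma omega_strictMonoOn {m : ℝ} (hm : 0 < m) : StrictMonoOn (omega m) (Ici 0) := by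
  intro x (hx : 0 ≤ x) y (hy : 0 ≤ y) hxy
  have hmxy : m * x < m * y := mul_lt_mul_of_pos_left hxy hm
  have hphi : phi (x / m) < phi (y / m) :=
    phi_strictMonoOn (div_nonneg hx hm.le) (div_nonneg hy hm.le) (div_lt_div_of_pos_right hxy hm)
  have hphi0 : 0 ≤ phi (x / m) := phi_nonneg (div_nonneg hx hm.le)
  exact sqrt_lt_sqrt (mul_nonneg (by positivity) hphi0)
    (mul_lt_mul'' hmxy hphi (by positivity) hphi0)

lemma omega_pos {m x : ℝ} (hm : 0 < m) (hx : 0 < x) : 0 < omega m x :=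
  omega_zero m ▸ omega_strictMonoOn hm self_mem_Ici hx.le hx

lemma omega_eq_abs_mul_log {m r : ℝ} (hm : m ≠ 0) (hr : r / m ≤ ξ) :
    omega m r = |r * log (r / m)| := by
  rw [omega, phi_eqOn_Iic hr, ← sqrt_sq_eq_abs]
  congr 1
  field_simp

lemma hasDerivAt_log_log_div {m r : ℝ} (hm : m ≠ 0) (hr : r ≠ 0) (hrm : log (r / m) ≠ 0) :
    HasDerivAt (fun r => log (log (r / m))) (1 / (r * log (r / m))) r := by
  convert (((hasDerivAt_id' r).div_const m).log (div_ne_zero hr hm)).log hrm using 1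
  field_simp

lemma tendsto_norm_log_log_div_nhdsGT_zero {m : ℝ} (hm : m ≠ 0) :
    Tendsto (fun r => ‖log (log (r / m))‖) (𝓝[>] 0) atTop := by
  have hlog : Tendsto (fun r => log r - log m) (𝓝[>] 0) atBot :=
    tendsto_atBot_add_const_right _ _ tendsto_log_nhdsGT_zero
  have hloglog : Tendsto (fun r => log (log r - log m)) (𝓝[>] 0) atTop := by
    simpa only [Function.comp_def, log_abs] using
      tendsto_log_atTop.comp (tendsto_abs_atBot_atTop.comp hlog)
  refine (tendsto_norm_atTop_atTop.comp hloglog).congr' ?_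
  filter_upwards [self_mem_nhdsWithin] with r (hr : 0 < r)
  rw [Function.comp_apply, log_div hr.ne' hm]

lemma not_integrableOn_one_div_omega {m s : ℝ} (hm : 0 < m) (hs : 0 < s) :
    ¬ IntegrableOn (fun r => 1 / omega m r) (Ioc 0 s) := by
  have hnear : ∀ᶠ r in 𝓝[>] 0, 0 < r ∧ r / m < ξ ∧ log (r / m) ≠ 0 := by
    filter_upwards [Ioo_mem_nhdsGT (mul_pos hm junction_pos)] with r hr
    have hrm : r / m < ξ := (div_lt_iff₀' hm).2 hr.2
    exact ⟨hr.1, hrm, (log_neg (div_pos hr.1 hm) (hrm.trans junction_lt_one)).ne⟩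
  have hderiv : ∀ᶠ r in 𝓝[>] 0,
      HasDerivAt (fun r => log (log (r / m))) (1 / (r * log (r / m))) r := by
    filter_upwards [hnear] with r hr using hasDerivAt_log_log_div hm.ne' hr.1.ne' hr.2.2
  refine not_integrableOn_of_tendsto_norm_atTop_of_deriv_isBigO_filter (𝓝[>] 0)
    (Ioc_mem_nhdsGT hs) (hderiv.mono fun r hr => hr.differentiableAt)
    (tendsto_norm_log_log_div_nhdsGT_zero hm.ne') (Asymptotics.IsBigO.of_bound' ?_)
  filter_upwards [hnear, hderiv] with r hr hr'
  rw [hr'.deriv, omega_eq_abs_mul_log hm.ne' hr.2.1.le]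
  simp

lemma lintegral_one_div_omega_eq_top {m s : ℝ} (hm : 0 < m) (hs : 0 < s) :
    ∫⁻ r in Ioc 0 s, ENNReal.ofReal (1 / omega m r) = ⊤ := by
  by_contra h
  refine not_integrableOn_one_div_omega hm hs ((lintegral_ofReal_ne_top_iff_integrable ?_ ?_).1 h)
  · have hcont : ContinuousOn (omega m) (Ioc 0 s) :=
      (omega_continuousOn hm.le).mono (Ioc_subset_Icc_self.trans Icc_subset_Ici_self)
    exact (continuousOn_const.div hcont fun r hr => (omega_pos hm hr.1).ne').aestronglyMeasurable
      measurableSet_Ioc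
  · exact Eventually.of_forall fun r => one_div_nonneg.2 (sqrt_nonneg _)

/-- `ω` is continuous and strictly increasing on `[0,∞)`,
vanishes at `0`, is positive on `(0,∞)`, and satisfies the Osgood
condition `∫_{(0,s₀]} dr/ω(r) = +∞` for every `s₀ > 0`. -/
theorem omega_osgood (m : ℝ) (hm : 0 < m) :
    ContinuousOn (omega m) (Set.Ici 0) ∧
    StrictMonoOn (omega m) (Set.Ici 0) ∧
    omega m 0 = 0 ∧
    (∀ x : ℝ, 0 < x → 0 < omega m x) ∧
    (∀ s₀ : ℝ, 0 < s₀ →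
      ∫⁻ r in Set.Ioc (0:ℝ) s₀, ENNReal.ofReal (1 / omega m r) = ⊤) :=
  ⟨omega_continuousOn hm.le, omega_strictMonoOn hm, omega_zero m, fun _ => omega_pos hm,
    fun _ => lintegral_one_div_omega_eq_top hm⟩

end
end
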